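/- For all integers m and e, the tetrahedral index satisfies u^{e} · I_Δ(m-1, e) + u^{-m} · I_Δ(m, e-1) - I_Δ(m,e) = 0, where u plays the role of q^{1/2} (so u^{e} = q^{e/2} and u^{-m} = q^{-m/2}). -/

import Mathlib

open scoped BigOperators

/-- Finite q-Pochhammer symbol `(a;q)_n = ∏_{i=0}^{n-1} (1 - a q^i)`. -/
noncomputable def qPoch (a q : ℂ) (n : ℕ) : ℂ :=
  ∏ i ∈ Finset.range n, (1 - a * q ^ i)

/-- Infinite q-Pochhammer symbol `(a;q)_∞ = ∏_{i=0}^{∞} (1 - a q^i)`. -/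
noncomputable def qPochInf (a q : ℂ) : ℂ :=
  ∏' i : ℕ, (1 - a * q ^ i)

/-- The `n`-th term of the series defining the tetrahedral index `I_Δ(m,e)`,
with `q = u^2` and vanishing below `e₊ = max(-e,0)`. -/
noncomputable def tetTerm (u : ℂ) (m e : ℤ) (n : ℕ) : ℂ :=
  if (-e).toNat ≤ n then
    (-1 : ℂ) ^ n * u ^ ((n : ℤ) * ((n : ℤ) + 1) - (2 * (n : ℤ) + e) * m) /
      (qPoch (u ^ 2) (u ^ 2) n * qPoch (u ^ 2) (u ^ 2) ((n : ℤ) + e).toNat)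
  else 0

/-- The tetrahedral index `I_Δ(m,e) = Σ_{n=e₊}^∞ (-1)^n u^{n(n+1)-(2n+e)m}/((q;q)_n (q;q)_{n+e})`. -/
noncomputable def tetIndex (u : ℂ) (m e : ℤ) : ℂ := ∑' n : ℕ, tetTerm u m e n

/-!
Extended by zero to `j < 0` (which builds the bound `n ≥ e₊` into the summand), `1/(q;q)_j`
satisfies `1/(q;q)_{j-1} = (1 - q^j)/(q;q)_j` for every integer `j`. As the `n`-th term of
`I_Δ(m,e)` is `(-1)^n u^{n(n+1)-(2n+e)m} · 1/(q;q)_n · 1/(q;q)_{n+e}`, the two series on the left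
contribute this term times `q^{n+e}` and times `1 - q^{n+e}`: the recurrence holds termwise.
All series converge absolutely, since `1/(q;q)_j` tends to `1/(q;q)_∞` (the infinite product does
not vanish) while the exponent of `u` grows quadratically in `n`.
-/

open Filter Topology

section QPochhammer

variable {a q : ℂ}

lemma qPoch_succ (a q : ℂ) (n : ℕ) : qPoch a q (n + 1) = qPoch a q n * (1 - a * q ^ n) :=
  Finset.prod_range_succ _ _

lemma one_sub_mul_pow_ne_zero (ha : ‖a‖ < 1) (hq : ‖q‖ ≤ 1) (i : ℕ) : 1 - a * q ^ i ≠ 0 := by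
  refine sub_ne_zero.mpr fun h => (ha.trans_le' ?_).false
  calc 1 = ‖a * q ^ i‖ := by rw [← h, norm_one]
    _ ≤ ‖a‖ := by
      rw [norm_mul, norm_pow]
      exact mul_le_of_le_one_right (norm_nonneg a) (pow_le_one₀ (norm_nonneg q) hq)

lemma summable_norm_neg_mul_pow (a : ℂ) (hq : ‖q‖ < 1) : Summable fun i => ‖-(a * q ^ i)‖ := by
  simpa [norm_pow] using (summable_geometric_of_lt_one (norm_nonneg q) hq).mul_left ‖a‖

lemma tendsto_qPoch_qPochInf (a : ℂ) (hq : ‖q‖ < 1) :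
    Tendsto (qPoch a q) atTop (𝓝 (qPochInf a q)) := by
  change Tendsto (fun n => ∏ i ∈ Finset.range n, (1 - a * q ^ i)) atTop
    (𝓝 (∏' i, (1 - a * q ^ i)))
  simpa only [sub_eq_add_neg] using
    (multipliable_one_add_of_summable (summable_norm_neg_mul_pow a hq)).tendsto_prod_tprod_nat

lemma qPochInf_ne_zero (ha : ‖a‖ < 1) (hq : ‖q‖ < 1) : qPochInf a q ≠ 0 := by
  simpa only [qPochInf, sub_eq_add_neg] using
    tprod_one_add_ne_zero_of_summable
      (fun i => by simpa only [← sub_eq_add_neg] using one_sub_mul_pow_ne_zero ha hq.le i)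
      (summable_norm_neg_mul_pow a hq)

noncomputable def qPochInv (q : ℂ) (j : ℤ) : ℂ :=
  if 0 ≤ j then (qPoch q q j.toNat)⁻¹ else 0

lemma qPochInv_natCast (q : ℂ) (n : ℕ) : qPochInv q n = (qPoch q q n)⁻¹ := by
  simp [qPochInv]

lemma one_sub_zpow_mul_qPochInv (hq : ‖q‖ < 1) (j : ℤ) :
    (1 - q ^ j) * qPochInv q j = qPochInv q (j - 1) := by
  rcases j with (_ | k) | k
  · simp [qPochInv]
  · have hk : 1 - q * q ^ k ≠ 0 := one_sub_mul_pow_ne_zero hq hq.le k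
    rw [Int.ofNat_eq_natCast, show ((k + 1 : ℕ) : ℤ) - 1 = k by omega, zpow_natCast,
      qPochInv_natCast, qPochInv_natCast, qPoch_succ, pow_succ', mul_inv, mul_left_comm,
      mul_inv_cancel₀ hk, mul_one]
  · have hneg : ¬ (0 ≤ Int.negSucc k) := by omega
    simp [qPochInv, hneg]

lemma tendsto_qPochInv (hq : ‖q‖ < 1) :
    Tendsto (qPochInv q) atTop (𝓝 (qPochInf q q)⁻¹) := by
  have htoNat : Tendsto Int.toNat atTop atTop :=
    tendsto_atTop_atTop.2 fun b => ⟨b, fun j hj => by omega⟩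
  refine (((tendsto_qPoch_qPochInf q hq).comp htoNat).inv₀
    (qPochInf_ne_zero hq hq)).congr' ?_
  filter_upwards [eventually_ge_atTop 0] with j hj
  simp [qPochInv, hj]

end QPochhammer

section TetrahedralIndex

variable {u : ℂ}

lemma tetTerm_eq (u : ℂ) (m e : ℤ) (n : ℕ) :
    tetTerm u m e n = (-1) ^ n * u ^ ((n : ℤ) * (n + 1) - (2 * n + e) * m) *
      qPochInv (u ^ 2) n * qPochInv (u ^ 2) (n + e) := by
  rw [tetTerm, qPochInv_natCast, qPochInv]
  by_cases h : 0 ≤ (n : ℤ) + e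
  · rw [if_pos (by omega), if_pos h]
    ring
  · rw [if_neg (by omega), if_neg h, mul_zero]

lemma tetTerm_recurrence (hu : u ≠ 0) (hu1 : ‖u‖ < 1) (m e : ℤ) (n : ℕ) :
    u ^ e * tetTerm u (m - 1) e n + u ^ (-m) * tetTerm u m (e - 1) n = tetTerm u m e n := by
  have hq : ‖u ^ 2‖ < 1 := by simpa using pow_lt_one₀ (norm_nonneg u) hu1 two_ne_zero
  have hshift : (1 - (u ^ 2) ^ ((n : ℤ) + e)) * qPochInv (u ^ 2) (n + e) =
      qPochInv (u ^ 2) (n + (e - 1)) := by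
    rw [← add_sub_assoc]
    exact one_sub_zpow_mul_qPochInv hq _
  have h1 : u ^ e * u ^ ((n : ℤ) * (n + 1) - (2 * n + e) * (m - 1)) =
      u ^ ((n : ℤ) * (n + 1) - (2 * n + e) * m) * (u ^ 2) ^ ((n : ℤ) + e) := by
    rw [← zpow_natCast, ← zpow_mul, ← zpow_add₀ hu, ← zpow_add₀ hu]
    congr 1
    push_cast
    ring
  have h2 : u ^ (-m) * u ^ ((n : ℤ) * (n + 1) - (2 * n + (e - 1)) * m) =
      u ^ ((n : ℤ) * (n + 1) - (2 * n + e) * m) := by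
    rw [← zpow_add₀ hu]
    congr 1
    ring
  rw [tetTerm_eq, tetTerm_eq, tetTerm_eq, ← hshift]
  linear_combination ((-1) ^ n * qPochInv (u ^ 2) n * qPochInv (u ^ 2) (n + e)) * h1 +
    ((-1) ^ n * qPochInv (u ^ 2) n * (1 - (u ^ 2) ^ ((n : ℤ) + e)) *
      qPochInv (u ^ 2) (n + e)) * h2

lemma eventually_le_tetExponent (m e : ℤ) :
    ∀ᶠ n : ℕ in atTop, (n : ℤ) ≤ n * (n + 1) - (2 * n + e) * m := by
  filter_upwards [eventually_ge_atTop (2 * m.natAbs + (e * m).natAbs + 1)] with n hn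
  have hgap : ((e * m).natAbs : ℤ) + 1 ≤ (n : ℤ) - 2 * m := by omega
  have hem : e * m ≤ ((e * m).natAbs : ℤ) := Int.le_natAbs
  nlinarith [mul_le_mul_of_nonneg_left hgap (by omega : (0 : ℤ) ≤ n),
    mul_nonneg (by omega : (0 : ℤ) ≤ n - 1) (by positivity : (0 : ℤ) ≤ (e * m).natAbs)]

lemma summable_tetTerm (hu : u ≠ 0) (hu1 : ‖u‖ < 1) (m e : ℤ) : Summable (tetTerm u m e) := by
  have hq : ‖u ^ 2‖ < 1 := by simpa using pow_lt_one₀ (norm_nonneg u) hu1 two_ne_zero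
  have hlim : Tendsto (fun n : ℕ => qPochInv (u ^ 2) n * qPochInv (u ^ 2) (n + e)) atTop
      (𝓝 ((qPochInf (u ^ 2) (u ^ 2))⁻¹ * (qPochInf (u ^ 2) (u ^ 2))⁻¹)) :=
    ((tendsto_qPochInv hq).comp tendsto_natCast_atTop_atTop).mul
      ((tendsto_qPochInv hq).comp
        (tendsto_atTop_add_const_right _ e tendsto_natCast_atTop_atTop))
  set C := ‖(qPochInf (u ^ 2) (u ^ 2))⁻¹ * (qPochInf (u ^ 2) (u ^ 2))⁻¹‖ + 1
  refine .of_norm_bounded_eventually_nat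
    ((summable_geometric_of_lt_one (norm_nonneg u) hu1).mul_left C) ?_
  filter_upwards [eventually_le_tetExponent m e,
    hlim.norm.eventually (gt_mem_nhds (lt_add_one _))] with n hexp hbound
  have hpow := zpow_le_zpow_right_of_le_one₀ (norm_pos_iff.mpr hu) hu1.le hexp
  rw [zpow_natCast] at hpow
  rw [tetTerm_eq, mul_assoc _ (qPochInv _ _), norm_mul, norm_mul, norm_pow, norm_neg, norm_one,
    one_pow, one_mul, norm_zpow, mul_comm C]
  exact mul_le_mul hpow hbound.le (norm_nonneg _) (pow_nonneg (norm_nonneg u) n)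

end TetrahedralIndex

/-- `q^{e/2} I_Δ(m-1,e) + q^{-m/2} I_Δ(m,e-1) - I_Δ(m,e) = 0`, `u = q^{1/2}`. -/
theorem stmt_8 (u : ℂ) (hu0 : 0 < ‖u‖) (hu1 : ‖u‖ < 1) (m e : ℤ) :
    u ^ e * tetIndex u (m - 1) e + u ^ (-m) * tetIndex u m (e - 1) - tetIndex u m e = 0 := by
  have hu : u ≠ 0 := norm_pos_iff.mp hu0
  rw [sub_eq_zero, tetIndex, tetIndex, tetIndex, ← tsum_mul_left, ← tsum_mul_left,
    ← ((summable_tetTerm hu hu1 _ _).mul_left _).tsum_add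
      ((summable_tetTerm hu hu1 _ _).mul_left _)]
  exact tsum_congr (tetTerm_recurrence hu hu1 m e)
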